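/- arXiv:1704.00820 — 3 statements merged into one kernel-verified Lean document; each statement's English description precedes it below -/
import Mathlib

section
/- Let B → X → Y → B̂ with B, B̂ binary, Pr[B=0] = a, Pr[B̂=0] = b. Then the error probability Pr[B ≠ B̂] ≥ a + b − 2ab − 2ρ_m(X;Y)√(a(1−a)b(1−b)). -/
open Finset Real

/-- Maximal correlation of a joint pmf `r` on `α × β`: the supremum of
`E[f(X)g(Y)]` over zero-mean, unit-second-moment `f`, `g`. -/
noncomputable def maxCorr {α β : Type*} [Fintype α] [Fintype β]
    (r : α → β → ℝ) : ℝ :=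
  sSup { t : ℝ | ∃ f : α → ℝ, ∃ g : β → ℝ,
    (∑ x, ∑ y, f x * r x y) = 0 ∧ (∑ x, ∑ y, g y * r x y) = 0 ∧
    (∑ x, ∑ y, (f x) ^ 2 * r x y) = 1 ∧ (∑ x, ∑ y, (g y) ^ 2 * r x y) = 1 ∧
    t = ∑ x, ∑ y, f x * g y * r x y }

/-!
Write `U = u(X, true)` and `W = w(Y, true)`, so that `a = E U`, `b = E W` and the error probability
is `E[U(1 - W) + (1 - U)W] = a + b - 2ab - 2 Cov(U, W)`. The centred variables `U - a`, `W - b`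
are admissible in the definition of `ρₘ` after normalisation, so `Cov(U, W) ≤ ρₘ √(Var U Var W)`,
and `Var U ≤ a(1 - a)`, `Var W ≤ b(1 - b)` because `U, W` take values in `[0, 1]`.
-/

section

variable {α β : Type*} [Fintype α] [Fintype β] {r : α → β → ℝ}

lemma sq_sum_mul_mul_le (hr0 : ∀ x y, 0 ≤ r x y) (f : α → ℝ) (g : β → ℝ) :
    (∑ x, ∑ y, f x * g y * r x y) ^ 2 ≤
      (∑ x, ∑ y, f x ^ 2 * r x y) * ∑ x, ∑ y, g y ^ 2 * r x y := by
  simp only [← Fintype.sum_prod_type']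
  exact sum_sq_le_sum_mul_sum_of_sq_le_mul _ (fun _ _ ↦ mul_nonneg (sq_nonneg _) (hr0 _ _))
    (fun _ _ ↦ mul_nonneg (sq_nonneg _) (hr0 _ _)) fun _ _ ↦ le_of_eq (by ring)

lemma le_maxCorr (hr0 : ∀ x y, 0 ≤ r x y) {f : α → ℝ} {g : β → ℝ}
    (hf : ∑ x, ∑ y, f x * r x y = 0) (hg : ∑ x, ∑ y, g y * r x y = 0)
    (hf2 : ∑ x, ∑ y, f x ^ 2 * r x y = 1) (hg2 : ∑ x, ∑ y, g y ^ 2 * r x y = 1) :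
    ∑ x, ∑ y, f x * g y * r x y ≤ maxCorr r := by
  unfold maxCorr
  refine le_csSup ⟨1, ?_⟩ ⟨f, g, hf, hg, hf2, hg2, rfl⟩
  rintro _ ⟨f, g, -, -, hf2, hg2, rfl⟩
  nlinarith [sq_sum_mul_mul_le hr0 f g]

lemma maxCorr_nonneg (hr0 : ∀ x y, 0 ≤ r x y) : 0 ≤ maxCorr r := by
  by_cases h : ∃ f : α → ℝ, ∃ g : β → ℝ,
    ∑ x, ∑ y, f x * r x y = 0 ∧ ∑ x, ∑ y, g y * r x y = 0 ∧
    ∑ x, ∑ y, f x ^ 2 * r x y = 1 ∧ ∑ x, ∑ y, g y ^ 2 * r x y = 1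
  · obtain ⟨f, g, hf, hg, hf2, hg2⟩ := h
    have hle := le_maxCorr hr0 hf hg hf2 hg2
    have hle_neg := le_maxCorr hr0 (g := fun y ↦ -g y) hf
      (by simp only [neg_mul, sum_neg_distrib, hg, neg_zero]) hf2 (by simpa only [neg_sq] using hg2)
    simp only [mul_neg, neg_mul, sum_neg_distrib] at hle_neg
    linarith
  · exact Real.sSup_nonneg fun t ⟨f, g, hf, hg, hf2, hg2, _⟩ ↦ absurd ⟨f, g, hf, hg, hf2, hg2⟩ h

lemma sum_mul_mul_le_maxCorr_mul_sqrt (hr0 : ∀ x y, 0 ≤ r x y) {f : α → ℝ} {g : β → ℝ}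
    {V W : ℝ} (hf : ∑ x, ∑ y, f x * r x y = 0) (hg : ∑ x, ∑ y, g y * r x y = 0)
    (hV : ∑ x, ∑ y, f x ^ 2 * r x y ≤ V) (hW : ∑ x, ∑ y, g y ^ 2 * r x y ≤ W) :
    ∑ x, ∑ y, f x * g y * r x y ≤ maxCorr r * √(V * W) := by
  set p := ∑ x, ∑ y, f x ^ 2 * r x y
  set q := ∑ x, ∑ y, g y ^ 2 * r x y
  have hp : 0 ≤ p := sum_nonneg fun x _ ↦ sum_nonneg fun y _ ↦ mul_nonneg (sq_nonneg _) (hr0 x y)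
  have hq : 0 ≤ q := sum_nonneg fun x _ ↦ sum_nonneg fun y _ ↦ mul_nonneg (sq_nonneg _) (hr0 x y)
  have hρ := maxCorr_nonneg hr0
  suffices hS : ∑ x, ∑ y, f x * g y * r x y ≤ maxCorr r * √(p * q) from
    hS.trans (mul_le_mul_of_nonneg_left (sqrt_le_sqrt (mul_le_mul hV hW hq (hp.trans hV))) hρ)
  by_cases hpq : p * q = 0
  · nlinarith [sq_sum_mul_mul_le hr0 f g, mul_nonneg hρ (sqrt_nonneg (p * q))]
  have hp0 : 0 < p := hp.lt_of_ne' (left_ne_zero_of_mul hpq)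
  have hq0 : 0 < q := hq.lt_of_ne' (right_ne_zero_of_mul hpq)
  have hnormalized := le_maxCorr hr0 (f := fun x ↦ f x / √p) (g := fun y ↦ g y / √q)
    (by simp only [div_mul_eq_mul_div, ← sum_div, hf, zero_div])
    (by simp only [div_mul_eq_mul_div, ← sum_div, hg, zero_div])
    (by simp only [div_pow, sq_sqrt hp, div_mul_eq_mul_div, ← sum_div]; exact div_self hp0.ne')
    (by simp only [div_pow, sq_sqrt hq, div_mul_eq_mul_div, ← sum_div]; exact div_self hq0.ne')
  rw [sqrt_mul hp, ← div_le_iff₀ (by positivity)]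
  have hterm : ∀ x y, f x / √p * (g y / √q) * r x y = f x * g y * r x y / (√p * √q) :=
    fun x y ↦ by ring
  simpa only [hterm, ← sum_div] using hnormalized

lemma sum_sub_mean_mul_eq_zero (hr1 : ∑ x, ∑ y, r x y = 1) {h : α → β → ℝ} {m : ℝ}
    (hm : m = ∑ x, ∑ y, r x y * h x y) : ∑ x, ∑ y, (h x y - m) * r x y = 0 := by
  simp only [sub_mul, sum_sub_distrib, mul_comm (h _ _), ← hm, ← mul_sum, hr1]
  ring

lemma sum_sub_mean_mul_sub_mean_mul (hr1 : ∑ x, ∑ y, r x y = 1) {h k : α → β → ℝ} {m n : ℝ}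
    (hm : m = ∑ x, ∑ y, r x y * h x y) (hn : n = ∑ x, ∑ y, r x y * k x y) :
    ∑ x, ∑ y, (h x y - m) * (k x y - n) * r x y = ∑ x, ∑ y, r x y * (h x y * k x y) - m * n := by
  have hterm : ∀ x y, (h x y - m) * (k x y - n) * r x y =
      r x y * (h x y * k x y) - n * (r x y * h x y) - m * (r x y * k x y) + m * n * r x y :=
    fun x y ↦ by ring
  simp only [hterm, sum_add_distrib, sum_sub_distrib, ← mul_sum, ← hm, ← hn, hr1]
  ring

lemma sum_sq_sub_mean_mul_le (hr0 : ∀ x y, 0 ≤ r x y) (hr1 : ∑ x, ∑ y, r x y = 1)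
    {h : α → β → ℝ} (h0 : ∀ x y, 0 ≤ h x y) (h1 : ∀ x y, h x y ≤ 1) {m : ℝ}
    (hm : m = ∑ x, ∑ y, r x y * h x y) :
    ∑ x, ∑ y, (h x y - m) ^ 2 * r x y ≤ m * (1 - m) :=
  calc ∑ x, ∑ y, (h x y - m) ^ 2 * r x y
      ≤ ∑ x, ∑ y, ((1 - 2 * m) * (r x y * h x y) + m ^ 2 * r x y) :=
        sum_le_sum fun x _ ↦ sum_le_sum fun y _ ↦ by
          nlinarith [mul_nonneg (mul_nonneg (h0 x y) (sub_nonneg.2 (h1 x y))) (hr0 x y)]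
    _ = m * (1 - m) := by
        simp only [sum_add_distrib, ← mul_sum, ← hm, hr1]
        ring

end

/-- Witsenhausen-type bound: for binary `B, B̂` with `B → X → Y → B̂`,
`Pr[B=0] = a`, `Pr[B̂=0] = b` (with `true` encoding the symbol `0`),
`Pr[B ≠ B̂] ≥ a + b − 2ab − 2ρₘ(X;Y)√(a(1−a)b(1−b))`. -/
theorem error_prob_lower_bound {α β : Type*} [Fintype α] [Fintype β]
    (r : α → β → ℝ) (hr0 : ∀ x y, 0 ≤ r x y) (hr1 : ∑ x, ∑ y, r x y = 1)
    (u : α → Bool → ℝ) (hu0 : ∀ x c, 0 ≤ u x c)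
    (hu1 : ∀ x, u x false + u x true = 1)
    (w : β → Bool → ℝ) (hw0 : ∀ y c, 0 ≤ w y c)
    (hw1 : ∀ y, w y false + w y true = 1)
    (a b : ℝ)
    (ha : a = ∑ x, ∑ y, r x y * u x true)
    (hb : b = ∑ x, ∑ y, r x y * w y true) :
    (∑ x, ∑ y, r x y * (u x true * w y false + u x false * w y true)) ≥
      a + b - 2 * a * b -
        2 * maxCorr r * Real.sqrt (a * (1 - a) * (b * (1 - b))) := by
  have hut : ∀ x, u x true ≤ 1 := fun x ↦ by linarith [hu1 x, hu0 x false]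
  have hwt : ∀ y, w y true ≤ 1 := fun y ↦ by linarith [hw1 y, hw0 y false]
  have herr : ∑ x, ∑ y, r x y * (u x true * w y false + u x false * w y true) =
      a + b - 2 * ∑ x, ∑ y, r x y * (u x true * w y true) := by
    have hterm : ∀ x y, r x y * (u x true * w y false + u x false * w y true) =
        r x y * u x true + r x y * w y true - 2 * (r x y * (u x true * w y true)) := fun x y ↦ by
      rw [eq_sub_of_add_eq (hu1 x), eq_sub_of_add_eq (hw1 y)]
      ring
    simp only [hterm, sum_sub_distrib, sum_add_distrib, ← mul_sum, ha, hb]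
  have hcov := sum_sub_mean_mul_sub_mean_mul hr1 (h := fun x _ ↦ u x true)
    (k := fun _ y ↦ w y true) ha hb
  have hcorr := sum_mul_mul_le_maxCorr_mul_sqrt hr0 (f := fun x ↦ u x true - a)
    (g := fun y ↦ w y true - b) (sum_sub_mean_mul_eq_zero hr1 ha) (sum_sub_mean_mul_eq_zero hr1 hb)
    (sum_sq_sub_mean_mul_le hr0 hr1 (fun x _ ↦ hu0 x true) (fun x _ ↦ hut x) ha)
    (sum_sq_sub_mean_mul_le hr0 hr1 (fun _ y ↦ hw0 y true) (fun _ y ↦ hwt y) hb)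
  beta_reduce at hcov hcorr
  linarith
end

section
/- Let X, Y be discrete finite random variables, M ≥ 2 an integer, and f: 𝒳 → [M] a surjective function. Define Adv(f(X)|Y) = 1 − max_k Pr[f(X)=k] − P_e(f(X)|Y). Then Adv(f(X)|Y) ≤ ρ_m(X;Y)·√(1 − 1/M) ≤ ρ_m(X;Y). -/
open Finset Real

section Aux
variable {α β : Type*} [Fintype α] [Fintype β]

/-- Cauchy-Schwarz with weights p. -/
lemma weighted_CS (p : α → β → ℝ) (hp0 : ∀ x y, 0 ≤ p x y) (u : α → ℝ) (v : β → ℝ) :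
    (∑ x, ∑ y, u x * v y * p x y) ^ 2 ≤
      (∑ x, ∑ y, (u x) ^ 2 * p x y) * (∑ x, ∑ y, (v y) ^ 2 * p x y) := by
  have h := Finset.sum_mul_sq_le_sq_mul_sq Finset.univ
    (fun z : α × β => u z.1 * Real.sqrt (p z.1 z.2))
    (fun z : α × β => v z.2 * Real.sqrt (p z.1 z.2))
  have e1 : ∀ z : α × β, (u z.1 * Real.sqrt (p z.1 z.2)) * (v z.2 * Real.sqrt (p z.1 z.2))
      = u z.1 * v z.2 * p z.1 z.2 := by
    intro z
    have h2 := Real.mul_self_sqrt (hp0 z.1 z.2)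
    rw [show u z.1 * Real.sqrt (p z.1 z.2) * (v z.2 * Real.sqrt (p z.1 z.2))
      = u z.1 * v z.2 * (Real.sqrt (p z.1 z.2) * Real.sqrt (p z.1 z.2)) from by ring, h2]
  have e2 : ∀ z : α × β, (u z.1 * Real.sqrt (p z.1 z.2)) ^ 2 = (u z.1) ^ 2 * p z.1 z.2 := by
    intro z; rw [mul_pow, Real.sq_sqrt (hp0 z.1 z.2)]
  have e3 : ∀ z : α × β, (v z.2 * Real.sqrt (p z.1 z.2)) ^ 2 = (v z.2) ^ 2 * p z.1 z.2 := by
    intro z; rw [mul_pow, Real.sq_sqrt (hp0 z.1 z.2)]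
  simp only [e1, e2, e3] at h
  simpa [Fintype.sum_prod_type] using h

lemma maxCorr_bddAbove (p : α → β → ℝ) (hp0 : ∀ x y, 0 ≤ p x y) :
    BddAbove { t : ℝ | ∃ f : α → ℝ, ∃ g : β → ℝ,
      (∑ x, ∑ y, f x * p x y) = 0 ∧ (∑ x, ∑ y, g y * p x y) = 0 ∧
      (∑ x, ∑ y, (f x) ^ 2 * p x y) = 1 ∧ (∑ x, ∑ y, (g y) ^ 2 * p x y) = 1 ∧
      t = ∑ x, ∑ y, f x * g y * p x y } := by
  refine ⟨1, fun t ht => ?_⟩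
  obtain ⟨f, g, _, _, hf2, hg2, rfl⟩ := ht
  have h := weighted_CS p hp0 f g
  rw [hf2, hg2] at h
  nlinarith [h]

lemma maxCorr_nonneg_s11 (p : α → β → ℝ) (hp0 : ∀ x y, 0 ≤ p x y) : 0 ≤ maxCorr p := by
  by_cases hne : ({ t : ℝ | ∃ f : α → ℝ, ∃ g : β → ℝ,
      (∑ x, ∑ y, f x * p x y) = 0 ∧ (∑ x, ∑ y, g y * p x y) = 0 ∧
      (∑ x, ∑ y, (f x) ^ 2 * p x y) = 1 ∧ (∑ x, ∑ y, (g y) ^ 2 * p x y) = 1 ∧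
      t = ∑ x, ∑ y, f x * g y * p x y } : Set ℝ) = ∅
  · rw [maxCorr, hne, Real.sSup_empty]
  · obtain ⟨t, f, g, h1, h2, h3, h4, h5⟩ := Set.nonempty_iff_ne_empty.2 hne
    have hmem : t ∈ { t : ℝ | ∃ f : α → ℝ, ∃ g : β → ℝ,
        (∑ x, ∑ y, f x * p x y) = 0 ∧ (∑ x, ∑ y, g y * p x y) = 0 ∧
        (∑ x, ∑ y, (f x) ^ 2 * p x y) = 1 ∧ (∑ x, ∑ y, (g y) ^ 2 * p x y) = 1 ∧
        t = ∑ x, ∑ y, f x * g y * p x y } := ⟨f, g, h1, h2, h3, h4, h5⟩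
    have hmem' : -t ∈ { t : ℝ | ∃ f : α → ℝ, ∃ g : β → ℝ,
        (∑ x, ∑ y, f x * p x y) = 0 ∧ (∑ x, ∑ y, g y * p x y) = 0 ∧
        (∑ x, ∑ y, (f x) ^ 2 * p x y) = 1 ∧ (∑ x, ∑ y, (g y) ^ 2 * p x y) = 1 ∧
        t = ∑ x, ∑ y, f x * g y * p x y } := by
      refine ⟨fun x => -f x, g, ?_, h2, ?_, h4, ?_⟩
      · simp only [neg_mul, Finset.sum_neg_distrib, h1, neg_zero]
      · simpa [neg_pow] using h3
      · simp only [neg_mul, Finset.sum_neg_distrib, ← h5]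
    have b := maxCorr_bddAbove p hp0
    have l1 := le_csSup b hmem
    have l2 := le_csSup b hmem'
    unfold maxCorr
    linarith

lemma cov_le_maxCorr (p : α → β → ℝ) (hp0 : ∀ x y, 0 ≤ p x y)
    (u : α → ℝ) (v : β → ℝ)
    (hu : ∑ x, ∑ y, u x * p x y = 0) (hv : ∑ x, ∑ y, v y * p x y = 0) :
    ∑ x, ∑ y, u x * v y * p x y ≤
      maxCorr p * (Real.sqrt (∑ x, ∑ y, (u x) ^ 2 * p x y) *
        Real.sqrt (∑ x, ∑ y, (v y) ^ 2 * p x y)) := by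
  set A := ∑ x, ∑ y, (u x) ^ 2 * p x y with hA
  set B := ∑ x, ∑ y, (v y) ^ 2 * p x y with hB
  have hA0 : 0 ≤ A := Finset.sum_nonneg fun x _ => Finset.sum_nonneg fun y _ =>
    mul_nonneg (sq_nonneg _) (hp0 x y)
  have hB0 : 0 ≤ B := Finset.sum_nonneg fun x _ => Finset.sum_nonneg fun y _ =>
    mul_nonneg (sq_nonneg _) (hp0 x y)
  have hCS := weighted_CS p hp0 u v
  rw [← hA, ← hB] at hCS
  rcases eq_or_lt_of_le hA0 with hA0' | hA0'
  · have h0 : ∑ x, ∑ y, u x * v y * p x y = 0 := by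
      nlinarith [sq_nonneg (∑ x, ∑ y, u x * v y * p x y)]
    rw [h0, ← hA0', Real.sqrt_zero]
    simp
  rcases eq_or_lt_of_le hB0 with hB0' | hB0'
  · have h0 : ∑ x, ∑ y, u x * v y * p x y = 0 := by
      nlinarith [sq_nonneg (∑ x, ∑ y, u x * v y * p x y)]
    rw [h0, ← hB0', Real.sqrt_zero]
    simp
  · have hsA : 0 < Real.sqrt A := Real.sqrt_pos.2 hA0'
    have hsB : 0 < Real.sqrt B := Real.sqrt_pos.2 hB0'
    have hsqA : Real.sqrt A ^ 2 = A := Real.sq_sqrt hA0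
    have hsqB : Real.sqrt B ^ 2 = B := Real.sq_sqrt hB0
    have hmem : (∑ x, ∑ y, u x * v y * p x y) / (Real.sqrt A * Real.sqrt B) ∈
        { t : ℝ | ∃ f : α → ℝ, ∃ g : β → ℝ,
          (∑ x, ∑ y, f x * p x y) = 0 ∧ (∑ x, ∑ y, g y * p x y) = 0 ∧
          (∑ x, ∑ y, (f x) ^ 2 * p x y) = 1 ∧ (∑ x, ∑ y, (g y) ^ 2 * p x y) = 1 ∧
          t = ∑ x, ∑ y, f x * g y * p x y } := by
      refine ⟨fun x => u x / Real.sqrt A, fun y => v y / Real.sqrt B, ?_, ?_, ?_, ?_, ?_⟩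
      · simp only [div_mul_eq_mul_div, ← Finset.sum_div, hu, zero_div]
      · simp only [div_mul_eq_mul_div, ← Finset.sum_div, hv, zero_div]
      · simp only [div_pow, hsqA, div_mul_eq_mul_div, ← Finset.sum_div, ← hA]
        exact div_self (ne_of_gt hA0')
      · simp only [div_pow, hsqB, div_mul_eq_mul_div, ← Finset.sum_div, ← hB]
        exact div_self (ne_of_gt hB0')
      · have key : ∀ (x : α) (y : β), u x / Real.sqrt A * (v y / Real.sqrt B) * p x y
            = u x * v y * p x y / (Real.sqrt A * Real.sqrt B) := by
          intro x y
          field_simp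
        simp only [key, ← Finset.sum_div]
    have hle := le_csSup (maxCorr_bddAbove p hp0) hmem
    rw [div_le_iff₀ (by positivity)] at hle
    calc ∑ x, ∑ y, u x * v y * p x y ≤ maxCorr p * (Real.sqrt A * Real.sqrt B) := hle
      _ = _ := rfl

end Aux

/-- The advantage over a random guess of estimating any surjective function
`f : 𝒳 → [M]` of `X` from `Y` (with any randomized estimator `F`) is at most
`ρₘ(X;Y)√(1 − 1/M) ≤ ρₘ(X;Y)`. -/
theorem advantage_le_maxCorr {α β : Type*} [Fintype α] [Fintype β]
    (M : ℕ) (hM : 2 ≤ M)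
    (p : α → β → ℝ) (hp0 : ∀ x y, 0 ≤ p x y) (hp1 : ∑ x, ∑ y, p x y = 1)
    (f : α → Fin M) (hf : Function.Surjective f)
    (F : β → Fin M → ℝ) (hF0 : ∀ y k, 0 ≤ F y k) (hF1 : ∀ y, ∑ k, F y k = 1) :
    ((∑ x, ∑ y, p x y * F y (f x)) -
        (univ.sup' ⟨⟨0, by omega⟩, Finset.mem_univ _⟩ fun k : Fin M =>
          ∑ x ∈ univ.filter fun x => f x = k, ∑ y, p x y) ≤
        maxCorr p * Real.sqrt (1 - 1 / (M : ℝ))) ∧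
      maxCorr p * Real.sqrt (1 - 1 / (M : ℝ)) ≤ maxCorr p := by
  classical
  have hrho : 0 ≤ maxCorr p := maxCorr_nonneg_s11 p hp0
  have hMpos : (0:ℝ) < M := by positivity
  have hsqrt_le : Real.sqrt (1 - 1 / (M : ℝ)) ≤ 1 := by
    have h1 : (1:ℝ) - 1 / (M : ℝ) ≤ 1 := by
      have : 0 ≤ 1 / (M : ℝ) := by positivity
      linarith
    calc Real.sqrt (1 - 1 / (M : ℝ)) ≤ Real.sqrt 1 := Real.sqrt_le_sqrt h1
      _ = 1 := Real.sqrt_one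
  refine ⟨?_, by nlinarith [hsqrt_le, hrho]⟩
  -- definitions
  set q : Fin M → ℝ := fun k => ∑ x ∈ univ.filter fun x => f x = k, ∑ y, p x y with hqdef
  set a : Fin M → α → ℝ := fun k x => if f x = k then 1 else 0 with hadef
  set m : Fin M → ℝ := fun k => ∑ x, ∑ y, F y k * p x y with hmdef
  have hFle : ∀ y k, F y k ≤ 1 := by
    intro y k
    calc F y k ≤ ∑ j, F y j := Finset.single_le_sum (fun j _ => hF0 y j) (Finset.mem_univ k)
      _ = 1 := hF1 y
  have hq0 : ∀ k, 0 ≤ q k := fun k => Finset.sum_nonneg fun x _ =>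
    Finset.sum_nonneg fun y _ => hp0 x y
  have hm0 : ∀ k, 0 ≤ m k := fun k => Finset.sum_nonneg fun x _ =>
    Finset.sum_nonneg fun y _ => mul_nonneg (hF0 y k) (hp0 x y)
  have hm_eq : ∀ k, ∑ x, ∑ y, F y k * p x y = m k := fun _ => rfl
  have pull : ∀ (c : ℝ) (g : α → β → ℝ), ∑ x, ∑ y, c * g x y = c * ∑ x, ∑ y, g x y := by
    intro c g
    rw [Finset.mul_sum]
    exact Finset.sum_congr rfl fun x _ => (Finset.mul_sum _ _ _).symm
  have hq_eq : ∀ k, ∑ x, ∑ y, a k x * p x y = q k := by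
    intro k
    simp only [hqdef]
    rw [Finset.sum_filter]
    refine Finset.sum_congr rfl fun x _ => ?_
    by_cases h : f x = k <;> simp [hadef, h]
  have hqsum : ∑ k, q k = 1 := by
    rw [← hp1]
    simp only [← hq_eq]
    rw [Finset.sum_comm]
    refine Finset.sum_congr rfl fun x _ => ?_
    rw [Finset.sum_comm]
    refine Finset.sum_congr rfl fun y _ => ?_
    simp [hadef, Finset.sum_ite_eq]
  have hmsum : ∑ k, m k = 1 := by
    rw [← hp1]
    simp only [hmdef]
    rw [Finset.sum_comm]
    refine Finset.sum_congr rfl fun x _ => ?_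
    rw [Finset.sum_comm]
    refine Finset.sum_congr rfl fun y _ => ?_
    rw [← Finset.sum_mul, hF1, one_mul]
  -- step A
  have stepA : ∑ k, ∑ x, ∑ y, a k x * F y k * p x y = ∑ x, ∑ y, p x y * F y (f x) := by
    rw [Finset.sum_comm]
    refine Finset.sum_congr rfl fun x _ => ?_
    rw [Finset.sum_comm]
    refine Finset.sum_congr rfl fun y _ => ?_
    have : ∀ k : Fin M, a k x * F y k * p x y = if f x = k then F y k * p x y else 0 := by
      intro k; by_cases h : f x = k <;> simp [hadef, h]
    simp only [this, Finset.sum_ite_eq, Finset.mem_univ, if_true]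
    ring
  -- step B
  have stepB : ∑ k, q k * m k ≤
      univ.sup' ⟨⟨0, by omega⟩, Finset.mem_univ _⟩ fun k : Fin M =>
        ∑ x ∈ univ.filter fun x => f x = k, ∑ y, p x y := by
    have hle : ∀ k, q k ≤ univ.sup' ⟨⟨0, by omega⟩, Finset.mem_univ _⟩ fun k : Fin M =>
        ∑ x ∈ univ.filter fun x => f x = k, ∑ y, p x y := by
      intro k
      exact Finset.le_sup' _ (Finset.mem_univ k)
    calc ∑ k, q k * m k ≤ ∑ k, (univ.sup' ⟨⟨0, by omega⟩, Finset.mem_univ _⟩ fun k : Fin M =>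
          ∑ x ∈ univ.filter fun x => f x = k, ∑ y, p x y) * m k := by
          refine Finset.sum_le_sum fun k _ => ?_
          exact mul_le_mul_of_nonneg_right (hle k) (hm0 k)
      _ = _ := by rw [← Finset.mul_sum, hmsum, mul_one]
  -- covariance identity
  have hcov : ∀ k, ∑ x, ∑ y, (a k x - q k) * (F y k - m k) * p x y
      = (∑ x, ∑ y, a k x * F y k * p x y) - q k * m k := by
    intro k
    have expand : ∀ (x : α) (y : β), (a k x - q k) * (F y k - m k) * p x y
        = a k x * F y k * p x y - m k * (a k x * p x y) - q k * (F y k * p x y)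
          + q k * m k * p x y := by intros; ring
    simp only [expand, Finset.sum_add_distrib, Finset.sum_sub_distrib, pull]
    rw [hq_eq k, hp1, hm_eq k]
    ring
  -- centering
  have hcentu : ∀ k, ∑ x, ∑ y, (a k x - q k) * p x y = 0 := by
    intro k
    have expand : ∀ (x : α) (y : β), (a k x - q k) * p x y
        = a k x * p x y - q k * p x y := by intros; ring
    simp only [expand, Finset.sum_sub_distrib, pull]
    rw [hq_eq k, hp1, mul_one, sub_self]
  have hcentv : ∀ k, ∑ x, ∑ y, (F y k - m k) * p x y = 0 := by
    intro k
    have expand : ∀ (x : α) (y : β), (F y k - m k) * p x y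
        = F y k * p x y - m k * p x y := by intros; ring
    simp only [expand, Finset.sum_sub_distrib, pull]
    rw [hm_eq k, hp1, mul_one, sub_self]
  -- variances
  set Va : Fin M → ℝ := fun k => ∑ x, ∑ y, (a k x - q k) ^ 2 * p x y with hVadef
  set Vb : Fin M → ℝ := fun k => ∑ x, ∑ y, (F y k - m k) ^ 2 * p x y with hVbdef
  have hVa0 : ∀ k, 0 ≤ Va k := fun k => Finset.sum_nonneg fun x _ =>
    Finset.sum_nonneg fun y _ => mul_nonneg (sq_nonneg _) (hp0 x y)
  have hVb0 : ∀ k, 0 ≤ Vb k := fun k => Finset.sum_nonneg fun x _ =>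
    Finset.sum_nonneg fun y _ => mul_nonneg (sq_nonneg _) (hp0 x y)
  have hVa_eq : ∀ k, Va k = q k - q k ^ 2 := by
    intro k
    have ha2 : ∀ x, (a k x) ^ 2 = a k x := by
      intro x; by_cases h : f x = k <;> simp [hadef, h]
    have expand : ∀ (x : α) (y : β), (a k x - q k) ^ 2 * p x y
        = a k x * p x y - 2 * q k * (a k x * p x y) + q k ^ 2 * p x y := by
      intro x y
      have h := ha2 x
      linear_combination p x y * h
    rw [hVadef]
    simp only [expand, Finset.sum_add_distrib, Finset.sum_sub_distrib, pull]
    rw [hq_eq k, hp1]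
    ring
  have hVb_le : ∀ k, Vb k ≤ m k := by
    intro k
    have expand : ∀ (x : α) (y : β), (F y k - m k) ^ 2 * p x y
        = (F y k) ^ 2 * p x y - 2 * m k * (F y k * p x y) + m k ^ 2 * p x y := by
      intros; ring
    have hsq : ∑ x, ∑ y, (F y k) ^ 2 * p x y ≤ ∑ x, ∑ y, F y k * p x y := by
      refine Finset.sum_le_sum fun x _ => Finset.sum_le_sum fun y _ => ?_
      have h1 := hF0 y k
      have h2 := hFle y k
      nlinarith [mul_nonneg (mul_nonneg h1 (sub_nonneg.2 h2)) (hp0 x y)]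
    rw [hVbdef]
    simp only [expand, Finset.sum_add_distrib, Finset.sum_sub_distrib, pull]
    rw [hp1, hm_eq k]
    nlinarith [hm0 k, hsq]
  have hVasum : ∑ k, Va k ≤ 1 - 1 / (M : ℝ) := by
    have hCS : (∑ k, q k) ^ 2 ≤ ((Finset.univ : Finset (Fin M)).card : ℝ) * ∑ k, q k ^ 2 := by
      exact_mod_cast sq_sum_le_card_mul_sum_sq (s := (univ : Finset (Fin M))) (f := q)
    rw [hqsum] at hCS
    simp only [Finset.card_univ, Fintype.card_fin] at hCS
    have hq2 : 1 / (M : ℝ) ≤ ∑ k, q k ^ 2 := by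
      rw [div_le_iff₀ hMpos]
      nlinarith [hCS]
    calc ∑ k, Va k = ∑ k, (q k - q k ^ 2) := Finset.sum_congr rfl fun k _ => hVa_eq k
      _ = 1 - ∑ k, q k ^ 2 := by rw [Finset.sum_sub_distrib, hqsum]
      _ ≤ 1 - 1 / (M : ℝ) := by linarith
  have hVbsum : ∑ k, Vb k ≤ 1 := by
    calc ∑ k, Vb k ≤ ∑ k, m k := Finset.sum_le_sum fun k _ => hVb_le k
      _ = 1 := hmsum
  -- put it together
  have stepD : ∀ k, (∑ x, ∑ y, a k x * F y k * p x y) - q k * m k ≤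
      maxCorr p * (Real.sqrt (Va k) * Real.sqrt (Vb k)) := by
    intro k
    rw [← hcov k]
    exact cov_le_maxCorr p hp0 (fun x => a k x - q k) (fun y => F y k - m k)
      (hcentu k) (hcentv k)
  have stepE : ∑ k, Real.sqrt (Va k) * Real.sqrt (Vb k) ≤
      Real.sqrt (∑ k, Va k) * Real.sqrt (∑ k, Vb k) :=
    Real.sum_sqrt_mul_sqrt_le _ hVa0 hVb0
  have final : ∑ k, ((∑ x, ∑ y, a k x * F y k * p x y) - q k * m k) ≤
      maxCorr p * Real.sqrt (1 - 1 / (M : ℝ)) := by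
    calc ∑ k, ((∑ x, ∑ y, a k x * F y k * p x y) - q k * m k)
        ≤ ∑ k, maxCorr p * (Real.sqrt (Va k) * Real.sqrt (Vb k)) :=
          Finset.sum_le_sum fun k _ => stepD k
      _ = maxCorr p * ∑ k, Real.sqrt (Va k) * Real.sqrt (Vb k) := by rw [Finset.mul_sum]
      _ ≤ maxCorr p * (Real.sqrt (∑ k, Va k) * Real.sqrt (∑ k, Vb k)) :=
          mul_le_mul_of_nonneg_left stepE hrho
      _ ≤ maxCorr p * (Real.sqrt (1 - 1 / (M : ℝ)) * Real.sqrt 1) := by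
          refine mul_le_mul_of_nonneg_left ?_ hrho
          refine mul_le_mul (Real.sqrt_le_sqrt hVasum) (Real.sqrt_le_sqrt hVbsum)
            (Real.sqrt_nonneg _) (Real.sqrt_nonneg _)
      _ = maxCorr p * Real.sqrt (1 - 1 / (M : ℝ)) := by rw [Real.sqrt_one, mul_one]
  have lhs_eq : (∑ x, ∑ y, p x y * F y (f x)) - ∑ k, q k * m k
      = ∑ k, ((∑ x, ∑ y, a k x * F y k * p x y) - q k * m k) := by
    rw [Finset.sum_sub_distrib, stepA]
  linarith [final, stepB, lhs_eq.ge, lhs_eq.le]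
end

section
/- Let S, X be discrete finite random variables and suppose there is f: 𝒳 → ℝ with E[f(X)] = 0, ‖f(X)‖₂ = 1, and E[f(X)|S=s] = 0 for all s. Let ε = 1/(2·max_x |f(x)|) and define p_{Y|X}(1|x) = 1/2 − ε f(x), p_{Y|X}(2|x) = 1/2 + ε f(x). Then Y is independent of S, and I(X;Y) = 1 − Σ_x p_X(x) h_b(1/2 + ε f(x)) > 0 (in bits). -/
/-!
The channel flips a fair coin biased by `ε f(x)`. Since `f(X)` has zero mean given every
`S = s`, the bias averages out: `P(Y = y | S = s) = 1/2` for every `s`, so `Y` is uniform and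
independent of `S`. With `Y` uniform, `I(X;Y) = H(Y) - H(Y|X) = 1 - E[h_b(1/2 + ε f(X))]`, and this
is positive because `h_b < 1` away from `1/2` and `ε f` is nonzero somewhere (`‖f(X)‖₂ = 1`).
-/

open Finset Real

noncomputable def binEnt (x : ℝ) : ℝ :=
  -(x * Real.logb 2 x) - (1 - x) * Real.logb 2 (1 - x)

lemma binEnt_eq_binEntropy_div_log_two (t : ℝ) : binEnt t = binEntropy t / log 2 := by
  simp only [binEnt, binEntropy, logb, log_inv]
  ring

lemma binEnt_le_one (t : ℝ) : binEnt t ≤ 1 := by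
  rw [binEnt_eq_binEntropy_div_log_two, div_le_one (log_pos one_lt_two)]
  exact binEntropy_le_log_two

lemma binEnt_lt_one {t : ℝ} (ht : t ≠ 1 / 2) : binEnt t < 1 := by
  rw [binEnt_eq_binEntropy_div_log_two, div_lt_one (log_pos one_lt_two)]
  exact binEntropy_lt_log_two.2 (by rwa [← one_div])

/-- `1 - h_b(t)` is the divergence of `(1 - t, t)` from the uniform distribution on two points. -/
lemma one_sub_binEnt_eq_sum_mul_logb (t : ℝ) :
    (1 - t) * logb 2 ((1 - t) / (1 / 2)) + t * logb 2 (t / (1 / 2)) = 1 - binEnt t := by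
  have mul_logb_two_mul (a : ℝ) : a * logb 2 (a / (1 / 2)) = a + a * logb 2 a := by
    rcases eq_or_ne a 0 with rfl | ha
    · simp
    · rw [show a / (1 / 2) = 2 * a by ring, logb_mul two_ne_zero ha, logb_self_eq_one one_lt_two]
      ring
  rw [mul_logb_two_mul, mul_logb_two_mul, binEnt]
  ring

lemma sum_mul_one_sub_binEnt_pos {α : Type*} [Fintype α] {q g : α → ℝ}
    (hq : ∀ x, 0 < q x) {x₀ : α} (hx₀ : g x₀ ≠ 0) :
    0 < ∑ x, q x * (1 - binEnt (1 / 2 + g x)) := by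
  refine sum_pos' (fun x _ => mul_nonneg (hq x).le (sub_nonneg.2 (binEnt_le_one _)))
    ⟨x₀, mem_univ _, mul_pos (hq x₀) (sub_pos.2 (binEnt_lt_one ?_))⟩
  simpa using hx₀

section BiasedBitChannel

variable {α : Type*}

noncomputable def biasedBitChannel (ε : ℝ) (f : α → ℝ) (x : α) : Bool → ℝ
  | false => 1 / 2 - ε * f x
  | true => 1 / 2 + ε * f x

lemma sum_mul_biasedBitChannel [Fintype α] {w f : α → ℝ} (hwf : ∑ x, w x * f x = 0) (ε : ℝ)
    (y : Bool) :
    ∑ x, w x * biasedBitChannel ε f x y = (∑ x, w x) / 2 := by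
  cases y <;>
  · simp only [biasedBitChannel, mul_sub, mul_add, sum_sub_distrib, sum_add_distrib,
      mul_left_comm _ ε, ← mul_sum, hwf, mul_zero, sub_zero, add_zero, ← sum_div, mul_one_div]

lemma sum_bool_mul_logb_biasedBitChannel {q : ℝ} (hq : q ≠ 0) (ε : ℝ) (f : α → ℝ) (x : α) :
    ∑ y : Bool, q * biasedBitChannel ε f x y *
        logb 2 (q * biasedBitChannel ε f x y / (q * (1 / 2))) =
      q * (1 - binEnt (1 / 2 + ε * f x)) := by
  simp only [Fintype.sum_bool, mul_div_mul_left _ _ hq, mul_assoc, ← mul_add, biasedBitChannel]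
  rw [← one_sub_binEnt_eq_sum_mul_logb, show (1 : ℝ) - (1 / 2 + ε * f x) = 1 / 2 - ε * f x by ring,
    add_comm]

end BiasedBitChannel

theorem explicit_perfect_privacy_mapping_general
    {σ α : Type*} [Fintype σ] [Fintype α] [Nonempty α]
    (p : σ → α → ℝ) (hp1 : ∑ s, ∑ x, p s x = 1)
    (hX : ∀ x, 0 < ∑ s, p s x)
    (f : α → ℝ)
    (hmean : ∑ x, (∑ s, p s x) * f x = 0)
    (hvar : ∑ x, (∑ s, p s x) * (f x) ^ 2 = 1)
    (horth : ∀ s, ∑ x, p s x * f x = 0)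
    (ε : ℝ) (hε : ε = 1 / (2 * univ.sup' univ_nonempty fun x => |f x|))
    (W : α → Bool → ℝ)
    (hWf : ∀ x, W x false = 1 / 2 - ε * f x)
    (hWt : ∀ x, W x true = 1 / 2 + ε * f x) :
    (∀ s y, (∑ x, p s x * W x y) =
        (∑ x, p s x) * ∑ x', (∑ s', p s' x') * W x' y) ∧
      (∑ x, ∑ y : Bool, (∑ s, p s x) * W x y *
          Real.logb 2 (((∑ s, p s x) * W x y) /
            ((∑ s, p s x) * ∑ x', (∑ s, p s x') * W x' y))) =
        1 - ∑ x, (∑ s, p s x) * binEnt (1 / 2 + ε * f x) ∧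
      0 < ∑ x, ∑ y : Bool, (∑ s, p s x) * W x y *
          Real.logb 2 (((∑ s, p s x) * W x y) /
            ((∑ s, p s x) * ∑ x', (∑ s, p s x') * W x' y)) := by
  obtain rfl : W = biasedBitChannel ε f :=
    funext₂ fun x y => by cases y <;> simp only [hWf, hWt, biasedBitChannel]
  have hpX : ∑ x, ∑ s, p s x = 1 := by rwa [sum_comm]
  have hY (y : Bool) : ∑ x, (∑ s, p s x) * biasedBitChannel ε f x y = 1 / 2 := by
    rw [sum_mul_biasedBitChannel hmean, hpX]
  have hMI : ∑ x, ∑ y : Bool, (∑ s, p s x) * biasedBitChannel ε f x y *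
      logb 2 ((∑ s, p s x) * biasedBitChannel ε f x y /
        ((∑ s, p s x) * ∑ x', (∑ s, p s x') * biasedBitChannel ε f x' y)) =
      ∑ x, (∑ s, p s x) * (1 - binEnt (1 / 2 + ε * f x)) := by
    simp only [hY, sum_bool_mul_logb_biasedBitChannel (hX _).ne']
  obtain ⟨x₀, hx₀⟩ : ∃ x, f x ≠ 0 := by
    by_contra! hf
    simp [hf] at hvar
  have hε0 : ε ≠ 0 := by
    rw [hε]
    exact one_div_ne_zero (mul_ne_zero two_ne_zero
      ((abs_pos.2 hx₀).trans_le (le_sup' (fun x => |f x|) (mem_univ x₀))).ne')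
  refine ⟨fun s y => ?_, ?_, ?_⟩
  · rw [sum_mul_biasedBitChannel (horth s), hY]
    ring
  · rw [hMI]
    simp only [mul_one_sub, sum_sub_distrib, hpX]
  · rw [hMI]
    exact sum_mul_one_sub_binEnt_pos hX (mul_ne_zero hε0 hx₀)

/-- Explicit perfect-privacy construction: given `f` with `E[f(X)] = 0`,
`‖f(X)‖₂ = 1` and `E[f(X)|S = s] = 0` for all `s`, let `ε = 1/(2 maxₓ|f(x)|)`
and let the binary channel be `W x false = 1/2 − ε f(x)`, `W x true = 1/2 + ε f(x)`.
Then `Y` is independent of `S`, and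
`I(X;Y) = 1 − ∑ₓ p_X(x) h_b(1/2 + ε f(x)) > 0` (in bits). -/
theorem explicit_perfect_privacy_mapping
    {σ α : Type*} [Fintype σ] [Fintype α] [Nonempty α]
    (p : σ → α → ℝ) (hp0 : ∀ s x, 0 ≤ p s x) (hp1 : ∑ s, ∑ x, p s x = 1)
    (hX : ∀ x, 0 < ∑ s, p s x)
    (f : α → ℝ)
    (hmean : ∑ x, (∑ s, p s x) * f x = 0)
    (hvar : ∑ x, (∑ s, p s x) * (f x) ^ 2 = 1)
    (horth : ∀ s, ∑ x, p s x * f x = 0)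
    (ε : ℝ) (hε : ε = 1 / (2 * univ.sup' univ_nonempty fun x => |f x|))
    (W : α → Bool → ℝ)
    (hWf : ∀ x, W x false = 1 / 2 - ε * f x)
    (hWt : ∀ x, W x true = 1 / 2 + ε * f x) :
    (∀ s y, (∑ x, p s x * W x y) =
        (∑ x, p s x) * ∑ x', (∑ s', p s' x') * W x' y) ∧
      (∑ x, ∑ y : Bool, (∑ s, p s x) * W x y *
          Real.logb 2 (((∑ s, p s x) * W x y) /
            ((∑ s, p s x) * ∑ x', (∑ s, p s x') * W x' y))) =
        1 - ∑ x, (∑ s, p s x) * binEnt (1 / 2 + ε * f x) ∧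
      0 < ∑ x, ∑ y : Bool, (∑ s, p s x) * W x y *
          Real.logb 2 (((∑ s, p s x) * W x y) /
            ((∑ s, p s x) * ∑ x', (∑ s, p s x') * W x' y)) :=
  explicit_perfect_privacy_mapping_general p hp1 hX f hmean hvar horth ε hε W hWf hWt
end
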